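/- arXiv:2001.10333 — 2 statements merged into one kernel-verified Lean document; each statement's English description precedes it below -/
import Mathlib

section
/- Let K₄ = (K, R, ⋆, {0}) be the frame with K = {0, a, b} (three distinct elements), ⋆0 = 0, ⋆a = b, ⋆b = a, and R consisting exactly of the triples (x, y, z) with z ∈ x·y, where 0·x = x·0 = {x} for each x ∈ K, a·a = {a, b}, a·b = {0, a, b}, b·a = {0, a, b}, and b·b = {b}. Then: (1) K₄ is a CR-frame; (2) K₄ does not satisfy (left reflection), since (a, a, b) ∈ R but (b, b, a) ∉ R; (3) in Cm(K₄) the law (X;Y)⌣ = Y⌣;X⌣ fails, since ({a};{a})⌣ = {a, b} while ({a}⌣);({a}⌣) = {b}, so Cm(K₄) is not a semi-associative relation algebra; (4) the predicate (reflection1) is not valid in K₄: for A = B = {a} and C = D = {b}, the set K ∖ ((F(A,B,C,D))⌣;(K ∖ G(A,B,C,D))) is empty and hence does not include {0}. -/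
/-- Composition in the complex algebra of a frame. -/
def scomp {K : Type*} (R : K → K → K → Prop) (X Y : Set K) : Set K :=
  {z | ∃ x ∈ X, ∃ y ∈ Y, R x y z}

/-- Converse in the complex algebra of a frame. -/
def sconv {K : Type*} (s : K → K) (X : Set K) : Set K := s '' X

/-- The complex algebra of the frame `(K, R, ⋆, I)` is a semi-associative
relation algebra. -/
def CmSA {K : Type*} (R : K → K → K → Prop) (s : K → K) (I : Set K) : Prop :=
  (∀ X Y Z : Set K, scomp R (X ∪ Y) Z = scomp R X Z ∪ scomp R Y Z) ∧
  (∀ X : Set K, scomp R X I = X) ∧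
  (∀ X : Set K, sconv s (sconv s X) = X) ∧
  (∀ X Y : Set K, sconv s (X ∪ Y) = sconv s X ∪ sconv s Y) ∧
  (∀ X Y : Set K, sconv s (scomp R X Y) = scomp R (sconv s Y) (sconv s X)) ∧
  (∀ X Y : Set K, scomp R (sconv s X) (scomp R X Y)ᶜ ⊆ Yᶜ) ∧
  (∀ X Y : Set K, scomp R X (scomp R Y Set.univ) = scomp R (scomp R X Y) Set.univ)

/-- `(K, R, ⋆, {z0})` is a CR-frame: postulates p1–p5 of Meyer and Routley. -/
def CRFrame {K : Type*} (R : K → K → K → Prop) (s : K → K) (z0 : K) : Prop :=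
  (∀ a b : K, R z0 a b ↔ a = b) ∧
  (∀ a b c d : K, (∃ x, R a b x ∧ R x c d) ↔ (∃ y, R a c y ∧ R y b d)) ∧
  (∀ a : K, R a a a) ∧
  (∀ a : K, s (s a) = a) ∧
  (∀ a b c : K, R a b c ↔ R a (s c) (s b))

/-- Frame condition (left reflection). -/
def LeftRefl {K : Type*} (R : K → K → K → Prop) (s : K → K) : Prop :=
  ∀ x y z, R x y z → R (s x) z y

/-- Validity of the predicate (reflection1) in the frame `(K, R, ⋆, I)`. -/
def Refl1Valid {K : Type*} (R : K → K → K → Prop) (s : K → K) (I : Set K) : Prop :=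
  ∀ A B C D : Set K,
    I ⊆ (scomp R (sconv s (scomp R A B ∩ C))
          (scomp R (A ∩ (sconv s D)ᶜ) B ∪ scomp R A (B ∩ scomp R D C))ᶜ)ᶜ

/-- The three-element carrier `{0, a, b}` of the frame `K₄`. -/
inductive K4 : Type
  | zero : K4
  | a : K4
  | b : K4

/-- The involution of the frame `K₄`: `⋆0 = 0`, `⋆a = b`, `⋆b = a`. -/
def star4 : K4 → K4
  | K4.zero => K4.zero
  | K4.a => K4.b
  | K4.b => K4.a

/-- The multiplication table of the frame `K₄`. -/
def mul4 : K4 → K4 → Set K4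
  | K4.zero, x => {x}
  | x, K4.zero => {x}
  | K4.a, K4.a => {K4.a, K4.b}
  | K4.a, K4.b => {K4.zero, K4.a, K4.b}
  | K4.b, K4.a => {K4.zero, K4.a, K4.b}
  | K4.b, K4.b => {K4.b}

/-- The ternary relation of the frame `K₄`: `R x y z ↔ z ∈ x·y`. -/
def R4 (x y z : K4) : Prop := z ∈ mul4 x y

/-- The set `F = ({a};{a}) ∩ {b}` used in the counterexample. -/
def Fset : Set K4 := scomp R4 {K4.a} {K4.a} ∩ {K4.b}

/-- The set `G = (({a} ∩ ({b}⌣)ᶜ);{a}) ∪ ({a};({a} ∩ ({b};{b})))`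
used in the counterexample. -/
def Gset : Set K4 :=
  scomp R4 ({K4.a} ∩ (sconv star4 ({K4.b} : Set K4))ᶜ) ({K4.a} : Set K4) ∪
    scomp R4 {K4.a} ({K4.a} ∩ scomp R4 {K4.b} {K4.b})

section ComplexAlgebra

variable {K : Type*} {R : K → K → K → Prop} {s : K → K}

@[simp]
lemma mem_scomp {X Y : Set K} {z : K} : z ∈ scomp R X Y ↔ ∃ x ∈ X, ∃ y ∈ Y, R x y z :=
  Iff.rfl

@[simp]
lemma sconv_singleton (x : K) : sconv s {x} = {s x} :=
  Set.image_singleton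

lemma not_leftRefl_of {x y z : K} (hR : R x y z) (hR' : ¬ R (s x) z y) : ¬ LeftRefl R s :=
  fun h => hR' (h x y z hR)

lemma CmSA.sconv_scomp {I : Set K} (h : CmSA R s I) (X Y : Set K) :
    sconv s (scomp R X Y) = scomp R (sconv s Y) (sconv s X) :=
  h.2.2.2.2.1 X Y

end ComplexAlgebra

namespace K4

deriving instance DecidableEq for K4

instance : Fintype K4 :=
  ⟨{zero, a, b}, fun x => by cases x <;> decide⟩

instance (x y : K4) : DecidablePred (R4 x y) := by
  unfold R4 mul4
  cases x <;> cases y <;> infer_instance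

lemma crFrame : CRFrame R4 star4 zero := by
  unfold CRFrame
  decide

lemma R4_a_a_b : R4 a a b := by decide

lemma not_R4_b_b_a : ¬ R4 b b a := by decide

lemma sconv_scomp_a_a : sconv star4 (scomp R4 {a} {a}) = ({a, b} : Set K4) := by
  ext z; cases z <;> simp [sconv, R4, mul4, star4]

lemma scomp_sconv_a_sconv_a :
    scomp R4 (sconv star4 {a}) (sconv star4 {a}) = ({b} : Set K4) := by
  ext z; cases z <;> simp [R4, mul4, star4]

lemma sconv_scomp_a_a_ne :
    sconv star4 (scomp R4 {a} {a}) ≠ scomp R4 (sconv star4 {a}) (sconv star4 {a}) := by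
  rw [sconv_scomp_a_a, scomp_sconv_a_sconv_a]
  intro h
  simpa using h.subset (Set.mem_insert a {b})

lemma sconv_Fset : sconv star4 Fset = {a} := by
  ext z; cases z <;> simp [Fset, sconv, R4, mul4, star4]

lemma Gset_eq_empty : Gset = ∅ := by
  ext z; cases z <;> simp [Gset, R4, mul4, star4]

-- `a·b = K`, so already `{a};{b}` is everything.
lemma compl_scomp_sconv_Fset_compl_Gset : (scomp R4 (sconv star4 Fset) Gsetᶜ)ᶜ = ∅ := by
  rw [sconv_Fset, Gset_eq_empty, Set.compl_empty, Set.compl_empty_iff]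
  exact Set.eq_univ_of_forall fun z => ⟨a, rfl, b, trivial, by cases z <;> decide⟩

end K4

/-- Theorem: `K₄` is a CR-frame; it does not satisfy (left reflection), as
witnessed by `(a,a,b) ∈ R` with `(b,b,a) ∉ R`; in its complex algebra the law
`(X;Y)⌣ = Y⌣;X⌣` fails (with `({a};{a})⌣ = {a,b}` but `{a}⌣;{a}⌣ = {b}`), so
the complex algebra is not a semi-associative relation algebra; and the
predicate (reflection1) is not valid in `K₄`: for `A = B = {a}` and
`C = D = {b}` the set `K ∖ (F⌣ ; (K ∖ G))` is empty, hence does not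
include `{0}`. -/
theorem K4_counterexample :
    CRFrame R4 star4 K4.zero ∧
    (R4 K4.a K4.a K4.b ∧ ¬ R4 K4.b K4.b K4.a ∧ ¬ LeftRefl R4 star4) ∧
    (sconv star4 (scomp R4 {K4.a} {K4.a}) = ({K4.a, K4.b} : Set K4) ∧
      scomp R4 (sconv star4 ({K4.a} : Set K4)) (sconv star4 ({K4.a} : Set K4)) =
        ({K4.b} : Set K4) ∧
      ¬ (∀ X Y : Set K4,
          sconv star4 (scomp R4 X Y) = scomp R4 (sconv star4 Y) (sconv star4 X)) ∧
      ¬ CmSA R4 star4 ({K4.zero} : Set K4)) ∧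
    (¬ Refl1Valid R4 star4 {K4.zero} ∧
      (scomp R4 (sconv star4 Fset) Gsetᶜ)ᶜ = (∅ : Set K4) ∧
      ¬ ({K4.zero} : Set K4) ⊆ (scomp R4 (sconv star4 Fset) Gsetᶜ)ᶜ) := by
  have zero_not_mem : ¬ ({K4.zero} : Set K4) ⊆ (scomp R4 (sconv star4 Fset) Gsetᶜ)ᶜ := by
    simp [K4.compl_scomp_sconv_Fset_compl_Gset]
  refine ⟨K4.crFrame,
    ⟨K4.R4_a_a_b, K4.not_R4_b_b_a, not_leftRefl_of K4.R4_a_a_b K4.not_R4_b_b_a⟩,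
    ⟨K4.sconv_scomp_a_a, K4.scomp_sconv_a_sconv_a, fun h => K4.sconv_scomp_a_a_ne (h _ _),
      fun h => K4.sconv_scomp_a_a_ne (h.sconv_scomp _ _)⟩,
    ⟨fun h => zero_not_mem (h {K4.a} {K4.a} {K4.b} {K4.b}),
      K4.compl_scomp_sconv_Fset_compl_Gset, zero_not_mem⟩⟩
end

section
/- Let K₁ = (K, R, ⋆, {0}) be the frame with K = {0, a, b, c} (four distinct elements), ⋆x = x for all x ∈ K, and R consisting exactly of the triples (x, y, z) with z ∈ x·y, where 0·x = x·0 = {x} for each x ∈ K, a·a = {0, a}, b·b = {0, b}, c·c = {0, c}, a·b = b·a = {c}, a·c = c·a = {b}, and b·c = c·b = {a}. Then K₁ satisfies (left reflection), (right reflection), (identity), (semi-Pasch), (dense), and (symm), but K₁ does not satisfy (Pasch); moreover in Cm(K₁) composition is not associative: ({a};{a});{b} = {b, c} while {a};({a};{b}) = {b}. Hence Cm(K₁) is a dense symmetric semi-associative relation algebra that is not a relation algebra. -/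
/-- The four-element carrier `{0, a, b, c}` of the frame `K₁`. -/
inductive K1 : Type
  | zero : K1
  | a : K1
  | b : K1
  | c : K1

/-- The multiplication table of the frame `K₁`. -/
def mul1 : K1 → K1 → Set K1
  | K1.zero, x => {x}
  | x, K1.zero => {x}
  | K1.a, K1.a => {K1.zero, K1.a}
  | K1.b, K1.b => {K1.zero, K1.b}
  | K1.c, K1.c => {K1.zero, K1.c}
  | K1.a, K1.b => {K1.c}
  | K1.b, K1.a => {K1.c}
  | K1.a, K1.c => {K1.b}
  | K1.c, K1.a => {K1.b}
  | K1.b, K1.c => {K1.a}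
  | K1.c, K1.b => {K1.a}

/-- The ternary relation of the frame `K₁`: `R x y z ↔ z ∈ x·y`. -/
def R1 (x y z : K1) : Prop := z ∈ mul1 x y

/-! On `K₁` every element reaches every other in one step (`y · w ∋ z` for a suitable `w`), so
`X ; 1 = 1` for every nonempty `X`, which makes semi-associativity automatic. Associativity, i.e.
(Pasch), fails already on atoms: `(a · a) · b` contains `c` via the idempotent part `a ∈ a · a`,
whereas `a · (a · b) = a · c = {b}`. -/

section ComplexAlgebra

variable {K : Type*} {R : K → K → K → Prop} {s : K → K}

theorem scomp_union_left (X Y Z : Set K) :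
    scomp R (X ∪ Y) Z = scomp R X Z ∪ scomp R Y Z := by
  ext z
  simp only [scomp, Set.mem_ofPred_eq, Set.mem_union, or_and_right, exists_or]

theorem scomp_singleton_singleton (x y : K) : scomp R {x} {y} = {z | R x y z} := by
  ext z
  simp [scomp]

theorem scomp_empty_left (Y : Set K) : scomp R ∅ Y = ∅ := by
  ext z
  simp [scomp]

theorem scomp_empty_right (X : Set K) : scomp R X ∅ = ∅ := by
  ext z
  simp [scomp]

theorem scomp_of_identity {I : Set K} (hI : ∀ x y, x = y ↔ ∃ u, u ∈ I ∧ R x u y)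
    (X : Set K) : scomp R X I = X := by
  ext z
  constructor
  · rintro ⟨x, hx, u, hu, h⟩
    rwa [← (hI x z).mpr ⟨u, hu, h⟩]
  · intro hz
    obtain ⟨u, hu, h⟩ := (hI z z).mp rfl
    exact ⟨z, hz, u, hu, h⟩

theorem sconv_sconv (hs : Function.Involutive s) (X : Set K) : sconv s (sconv s X) = X := by
  simp only [sconv, Set.image_image, hs _, Set.image_id']

theorem sconv_union (X Y : Set K) : sconv s (X ∪ Y) = sconv s X ∪ sconv s Y :=
  Set.image_union s X Y

theorem sconv_id (X : Set K) : sconv id X = X :=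
  Set.image_id X

theorem scomp_sconv_scomp_compl_subset (hs : Function.Involutive s)
    (hl : ∀ x y z, R x y z → R (s x) z y) (X Y : Set K) :
    scomp R (sconv s X) (scomp R X Y)ᶜ ⊆ Yᶜ := by
  rintro z ⟨_, ⟨x, hx, rfl⟩, w, hw, h⟩ hz
  exact hw ⟨x, hx, z, hz, hs x ▸ hl _ _ _ h⟩

/-- Right, left and right reflection in turn send `R x y z` to `R (⋆y) (⋆x) (⋆z)`. -/
theorem rel_sconv_of_reflection (hl : ∀ x y z, R x y z → R (s x) z y)
    (hr : ∀ x y z, R x y z → R z (s y) x) {x y z : K} (h : R x y z) : R (s y) (s x) (s z) :=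
  hr _ _ _ (hl _ _ _ (hr _ _ _ h))

theorem sconv_scomp (hs : Function.Involutive s) (hl : ∀ x y z, R x y z → R (s x) z y)
    (hr : ∀ x y z, R x y z → R z (s y) x) (X Y : Set K) :
    sconv s (scomp R X Y) = scomp R (sconv s Y) (sconv s X) := by
  ext z
  constructor
  · rintro ⟨z, ⟨x, hx, y, hy, h⟩, rfl⟩
    exact ⟨s y, ⟨y, hy, rfl⟩, s x, ⟨x, hx, rfl⟩, rel_sconv_of_reflection hl hr h⟩
  · rintro ⟨_, ⟨y, hy, rfl⟩, _, ⟨x, hx, rfl⟩, h⟩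
    have h' := rel_sconv_of_reflection hl hr h
    rw [hs x, hs y] at h'
    exact ⟨s z, ⟨x, hx, y, hy, h'⟩, hs z⟩

theorem scomp_univ_of_nonempty (hsurj : ∀ y z, ∃ w, R y w z) {X : Set K} (hX : X.Nonempty) :
    scomp R X Set.univ = Set.univ := by
  refine Set.eq_univ_of_forall fun z => ?_
  obtain ⟨x, hx⟩ := hX
  obtain ⟨w, hw⟩ := hsurj x z
  exact ⟨x, hx, w, trivial, hw⟩

theorem scomp_scomp_univ (hsurj : ∀ y z, ∃ w, R y w z) (htot : ∀ x y, ∃ z, R x y z)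
    (X Y : Set K) : scomp R X (scomp R Y Set.univ) = scomp R (scomp R X Y) Set.univ := by
  rcases X.eq_empty_or_nonempty with rfl | hX
  · simp only [scomp_empty_left]
  rcases Y.eq_empty_or_nonempty with rfl | hY
  · simp only [scomp_empty_left, scomp_empty_right]
  have hXY : (scomp R X Y).Nonempty := by
    obtain ⟨x, hx⟩ := hX
    obtain ⟨y, hy⟩ := hY
    obtain ⟨z, hz⟩ := htot x y
    exact ⟨z, x, hx, y, hy, hz⟩
  rw [scomp_univ_of_nonempty hsurj hY, scomp_univ_of_nonempty hsurj hX,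
    scomp_univ_of_nonempty hsurj hXY]

theorem cmSA_of_frame {I : Set K} (hs : Function.Involutive s)
    (hl : ∀ x y z, R x y z → R (s x) z y) (hr : ∀ x y z, R x y z → R z (s y) x)
    (hI : ∀ x y, x = y ↔ ∃ u, u ∈ I ∧ R x u y)
    (hsurj : ∀ y z, ∃ w, R y w z) (htot : ∀ x y, ∃ z, R x y z) : CmSA R s I :=
  ⟨scomp_union_left, scomp_of_identity hI, sconv_sconv hs, sconv_union,
    sconv_scomp hs hl hr, scomp_sconv_scomp_compl_subset hs hl,
    scomp_scomp_univ hsurj htot⟩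

theorem subset_scomp_self (hd : ∀ x, R x x x) (X : Set K) : X ⊆ scomp R X X :=
  fun x hx => ⟨x, hx, x, hx, hd x⟩

end ComplexAlgebra

namespace K1

def equivFin : K1 ≃ Fin 4 where
  toFun | zero => 0 | a => 1 | b => 2 | c => 3
  invFun := ![zero, a, b, c]
  left_inv x := by cases x <;> rfl
  right_inv i := by fin_cases i <;> rfl

instance : DecidableEq K1 := equivFin.decidableEq

instance : Fintype K1 := Fintype.ofEquiv _ equivFin.symm

instance (x y z : K1) : Decidable (R1 x y z) := by
  unfold R1; cases x <;> cases y <;> unfold mul1 <;> infer_instance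

theorem R1_left_reflection : ∀ x y z, R1 x y z → R1 x z y := by decide

theorem R1_right_reflection : ∀ x y z, R1 x y z → R1 z y x := by decide

theorem R1_identity : ∀ x y, x = y ↔ ∃ u, u ∈ ({zero} : Set K1) ∧ R1 x u y := by decide

theorem R1_dense : ∀ x, R1 x x x := by decide

theorem R1_exists_mid : ∀ y z, ∃ w, R1 y w z := by decide

theorem R1_exists_out : ∀ x y, ∃ z, R1 x y z := by decide

theorem not_pasch : ¬ ∀ v w y z, (∃ x, R1 v w x ∧ R1 x y z) → ∃ u, R1 v u z ∧ R1 w y u := by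
  intro h
  have hpasch := h a a b c ⟨a, by decide, by decide⟩
  revert hpasch
  decide

theorem scomp_singleton_singleton_eq_mul1 (x y : K1) : scomp R1 {x} {y} = mul1 x y :=
  scomp_singleton_singleton x y

theorem scomp_aa_b : scomp R1 (scomp R1 {a} {a}) {b} = {b, c} := by
  rw [scomp_singleton_singleton_eq_mul1, show mul1 a a = {zero, a} from rfl, Set.insert_eq,
    scomp_union_left, scomp_singleton_singleton_eq_mul1, scomp_singleton_singleton_eq_mul1]
  rfl

theorem scomp_a_ab : scomp R1 {a} (scomp R1 {a} {b}) = {b} := by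
  rw [scomp_singleton_singleton_eq_mul1, show mul1 a b = {c} from rfl,
    scomp_singleton_singleton_eq_mul1]
  rfl

theorem not_scomp_assoc :
    ¬ ∀ X Y Z : Set K1, scomp R1 X (scomp R1 Y Z) = scomp R1 (scomp R1 X Y) Z := by
  intro h
  have hc : c ∈ scomp R1 (scomp R1 {a} {a}) {b} := by
    rw [scomp_aa_b]; exact Or.inr rfl
  rw [← h, scomp_a_ab] at hc
  exact absurd hc (by decide)

end K1

/-- Theorem: the frame `K₁` (with `⋆ = id` and identity set `{0}`) satisfies
(left reflection), (right reflection), (identity), (semi-Pasch), (dense), and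
(symm), but not (Pasch); composition in its complex algebra is not associative
(`({a};{a});{b} = {b,c}` while `{a};({a};{b}) = {b}`); hence the complex
algebra is a dense symmetric semi-associative relation algebra that is not a
relation algebra. -/
theorem K1_counterexample :
    ((∀ x y z : K1, R1 x y z → R1 (id x) z y) ∧
     (∀ x y z : K1, R1 x y z → R1 z (id y) x) ∧
     (∀ x y : K1, x = y ↔ ∃ u, u ∈ ({K1.zero} : Set K1) ∧ R1 x u y) ∧
     (∀ v w y z : K1, (∃ x, R1 v w x ∧ R1 x y z) → ∃ u, R1 v u z) ∧
     (∀ x : K1, R1 x x x) ∧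
     (∀ x : K1, id x = x)) ∧
    ¬ (∀ v w y z : K1, (∃ x, R1 v w x ∧ R1 x y z) →
        ∃ u, R1 v u z ∧ R1 w y u) ∧
    (scomp R1 (scomp R1 {K1.a} {K1.a}) {K1.b} = ({K1.b, K1.c} : Set K1) ∧
     scomp R1 {K1.a} (scomp R1 {K1.a} {K1.b}) = ({K1.b} : Set K1)) ∧
    (CmSA R1 id ({K1.zero} : Set K1) ∧
     (∀ X : Set K1, X ⊆ scomp R1 X X) ∧
     (∀ X : Set K1, sconv id X = X) ∧
     ¬ (∀ X Y Z : Set K1,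
        scomp R1 X (scomp R1 Y Z) = scomp R1 (scomp R1 X Y) Z)) :=
  ⟨⟨K1.R1_left_reflection, K1.R1_right_reflection, K1.R1_identity,
      fun v _ _ z _ => K1.R1_exists_mid v z, K1.R1_dense, fun _ => rfl⟩,
    K1.not_pasch,
    ⟨K1.scomp_aa_b, K1.scomp_a_ab⟩,
    cmSA_of_frame (fun _ => rfl) K1.R1_left_reflection K1.R1_right_reflection K1.R1_identity
      K1.R1_exists_mid K1.R1_exists_out,
    subset_scomp_self K1.R1_dense, sconv_id, K1.not_scomp_assoc⟩
end
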